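/- Let a_1,…,a_n ≥ 0, r = √(Σ a_i²) > 0, and let x = Σ_v x_v e_v ∈ Cl(n) be nonzero, supported on W ⊆ {0,1}^n, with x S_a = r·x where S_a = Σ a_i e_i. Then for v_0 maximizing |x_{v_0}|, the weighted degree Σ_{i : v_0(i) ∈ W} a_i is at least r. -/

import Mathlib

open scoped BigOperators

/-- `Cl n`: the real Clifford algebra of the standard positive definite quadratic form on `ℝⁿ`. -/
noncomputable abbrev Cl (n : ℕ) : Type :=
  CliffordAlgebra (QuadraticMap.weightedSumSquares ℝ (fun _ : Fin n => (1 : ℝ)))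

/-- The orthonormal generators `e i` of `Cl n`, satisfying `e i ^ 2 = 1`, `e i * e j = - e j * e i`. -/
noncomputable def e (n : ℕ) (i : Fin n) : Cl n :=
  CliffordAlgebra.ι _ (Pi.single i 1)

/-- `S = e 1 + ⋯ + e n`. -/
noncomputable def S (n : ℕ) : Cl n := ∑ i, e n i


/-- The basis element of `Cl n` corresponding to a vertex `v ∈ {0,1}ⁿ`:
the product of the `e i` with `v i = true`, in increasing order of `i`. -/
noncomputable def eVert (n : ℕ) (v : Fin n → Bool) : Cl n :=
  (((List.finRange n).filter (fun i => v i)).map (e n)).prod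

namespace CliffHelper

open MulOpposite

variable {n : ℕ}

/-- The module on which the (right-multiplication) representation of `Cl n` acts. -/
abbrev Mo (n : ℕ) := (Fin n → Bool) → ℝ

/-- Sign picked up when multiplying `e_v` on the right by `e i`. -/
def sgn (i : Fin n) (v : Fin n → Bool) : ℝ :=
  ∏ k, if i < k ∧ v k = true then (-1:ℝ) else 1

lemma abs_sgn (i : Fin n) (v : Fin n → Bool) : |sgn i v| = 1 := by
  rw [sgn, Finset.abs_prod]
  refine Finset.prod_eq_one fun k _ => ?_
  split <;> simp

lemma sgn_mul_self (i : Fin n) (v : Fin n → Bool) : sgn i v * sgn i v = 1 := by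
  have h := abs_sgn i v
  nlinarith [sq_abs (sgn i v)]

lemma sgn_update_of_not_lt {i j : Fin n} (v : Fin n → Bool) (b : Bool) (h : ¬ j < i) :
    sgn j (Function.update v i b) = sgn j v := by
  unfold sgn
  refine Finset.prod_congr rfl fun k _ => ?_
  by_cases hk : k = i
  · subst hk; simp [h]
  · rw [Function.update_of_ne hk]

lemma sgn_update_of_lt {i j : Fin n} (v : Fin n → Bool) (h : j < i) :
    sgn j (Function.update v i (!v i)) = - sgn j v := by
  unfold sgn
  rw [← Finset.mul_prod_erase _ _ (Finset.mem_univ i),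
      ← Finset.mul_prod_erase _ _ (Finset.mem_univ i)]
  have h1 : ∀ k ∈ Finset.univ.erase i,
      (if j < k ∧ (Function.update v i (!v i)) k = true then (-1:ℝ) else 1)
        = (if j < k ∧ v k = true then (-1:ℝ) else 1) := by
    intro k hk
    rw [Function.update_of_ne (Finset.ne_of_mem_erase hk)]
  rw [Finset.prod_congr rfl h1]
  cases hvi : v i <;> simp [h, hvi]

lemma sgn_eq_one {i : Fin n} {v : Fin n → Bool} (h : ∀ k, i < k → v k = false) :
    sgn i v = 1 := by
  unfold sgn
  refine Finset.prod_eq_one fun k _ => ?_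
  by_cases hk : i < k
  · simp [h k hk]
  · simp [hk]

/-- The elementary operator corresponding to right multiplication by `e i`. -/
noncomputable def T (i : Fin n) : Mo n →ₗ[ℝ] Mo n where
  toFun g := fun v => sgn i v * g (Function.update v i (!v i))
  map_add' g h := by funext v; simp [mul_add]
  map_smul' r g := by funext v; simp [smul_eq_mul]; ring

lemma T_apply (i : Fin n) (g : Mo n) (v : Fin n → Bool) :
    T i g v = sgn i v * g (Function.update v i (!v i)) := rfl

lemma flip_flip (v : Fin n → Bool) (i : Fin n) :
    Function.update (Function.update v i (!v i)) i (!(Function.update v i (!v i)) i) = v := by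
  simp [Function.update_idem]

lemma flip_comm {i j : Fin n} (v : Fin n → Bool) (h : i ≠ j) :
    Function.update (Function.update v i (!v i)) j (!(Function.update v i (!v i)) j)
      = Function.update (Function.update v j (!v j)) i (!(Function.update v j (!v j)) i) := by
  rw [Function.update_of_ne h.symm, Function.update_of_ne h, Function.update_comm h]

lemma Trel (i j : Fin n) :
    T i * T j + T j * T i
      = if i = j then ((2:ℝ) • (1 : Module.End ℝ (Mo n))) else 0 := by
  split_ifs with h
  · subst h
    refine LinearMap.ext fun g => funext fun v => ?_
    simp only [LinearMap.add_apply, Module.End.mul_apply, T_apply, LinearMap.smul_apply,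
      Module.End.one_apply, Pi.add_apply, Pi.smul_apply, smul_eq_mul]
    rw [flip_flip, sgn_update_of_not_lt v (!v i) (lt_irrefl i)]
    rw [← mul_assoc, sgn_mul_self i v, one_mul]; ring
  · refine LinearMap.ext fun g => funext fun v => ?_
    simp only [LinearMap.add_apply, Module.End.mul_apply, T_apply, LinearMap.zero_apply,
      Pi.add_apply, Pi.zero_apply]
    rw [flip_comm v h]
    rcases lt_or_gt_of_ne h with hij | hij
    · rw [sgn_update_of_not_lt v (!v i) (not_lt.mpr hij.le),
        sgn_update_of_lt v hij]
      ring
    · rw [sgn_update_of_not_lt v (!v j) (not_lt.mpr hij.le),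
        sgn_update_of_lt v hij]
      ring

/-- The linear map defining the representation. -/
noncomputable def fmap (n : ℕ) : (Fin n → ℝ) →ₗ[ℝ] (Module.End ℝ (Mo n))ᵐᵒᵖ where
  toFun u := op (∑ i, u i • T i)
  map_add' u w := by
    simp [add_smul, Finset.sum_add_distrib]
  map_smul' r u := by
    simp [mul_smul, Finset.smul_sum]

lemma fmap_sq (u : Fin n → ℝ) :
    fmap n u * fmap n u
      = algebraMap ℝ (Module.End ℝ (Mo n))ᵐᵒᵖ
          (QuadraticMap.weightedSumSquares ℝ (fun _ : Fin n => (1 : ℝ)) u) := by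
  have key : (∑ i, u i • T (n := n) i) * (∑ j, u j • T j)
      = (∑ i, u i * u i) • (1 : Module.End ℝ (Mo n)) := by
    have hD : (∑ i, u i • T (n := n) i) * (∑ j, u j • T j)
        = ∑ i, ∑ j, (u i * u j) • (T i * T j) := by
      rw [Finset.sum_mul_sum]
      simp only [smul_mul_assoc, mul_smul_comm, smul_smul]
      exact Finset.sum_congr rfl fun i _ => Finset.sum_congr rfl fun j _ => by
        rw [mul_comm (u j) (u i)]
    have h2 : (2:ℝ) • ((∑ i, ∑ j, (u i * u j) • (T (n := n) i * T j)))
        = (2:ℝ) • ((∑ i, u i * u i) • (1 : Module.End ℝ (Mo n))) := by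
      have hswap : (∑ i, ∑ j, (u i * u j) • (T (n := n) i * T j))
          = ∑ i, ∑ j, (u i * u j) • (T j * T i) := by
        rw [Finset.sum_comm]
        refine Finset.sum_congr rfl fun i _ => Finset.sum_congr rfl fun j _ => ?_
        rw [mul_comm (u j) (u i)]
      rw [two_smul]
      nth_rewrite 2 [hswap]
      rw [← Finset.sum_add_distrib]
      have : ∀ i : Fin n, (∑ j, (u i * u j) • (T (n := n) i * T j))
          + (∑ j, (u i * u j) • (T j * T i))
          = (u i * u i) • ((2:ℝ) • (1 : Module.End ℝ (Mo n))) := by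
        intro i
        rw [← Finset.sum_add_distrib]
        have : ∀ j : Fin n, (u i * u j) • (T (n := n) i * T j) + (u i * u j) • (T j * T i)
            = if i = j then (u i * u j) • ((2:ℝ) • (1 : Module.End ℝ (Mo n))) else 0 := by
          intro j
          rw [← smul_add, Trel]
          split_ifs <;> simp
        rw [Finset.sum_congr rfl fun j _ => this j]
        simp [Finset.sum_ite_eq]
      rw [Finset.sum_congr rfl fun i _ => this i, Finset.sum_smul, Finset.smul_sum]
      refine Finset.sum_congr rfl fun i _ => ?_
      rw [smul_smul, smul_smul]; congr 1; ring
    have := smul_right_injective (Module.End ℝ (Mo n)) (two_ne_zero (α := ℝ)) h2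
    rw [hD, this]
  have hop : fmap n u * fmap n u = op ((∑ i, u i • T (n := n) i) * (∑ j, u j • T j)) := by
    rw [op_mul]; rfl
  rw [hop, key]
  rw [MulOpposite.algebraMap_apply]
  congr 1
  rw [Algebra.algebraMap_eq_smul_one]
  congr 1
  simp [QuadraticMap.weightedSumSquares_apply, smul_eq_mul]

/-- The representation of `Cl n` (by right multiplication operators, hence valued in the
opposite of the endomorphism algebra). -/
noncomputable def rho (n : ℕ) : Cl n →ₐ[ℝ] (Module.End ℝ (Mo n))ᵐᵒᵖ :=
  CliffordAlgebra.lift _ ⟨fmap n, fmap_sq⟩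

lemma rho_e (i : Fin n) : rho n (e n i) = op (T i) := by
  rw [e, rho, CliffordAlgebra.lift_ι_apply]
  have hfm : (fmap n) (Pi.single i (1:ℝ))
      = op (∑ j, (Pi.single i (1:ℝ) : Fin n → ℝ) j • T j) := rfl
  rw [hfm]
  congr 1
  rw [Finset.sum_eq_single i]
  · simp
  · intro j _ hj; simp [Pi.single_eq_of_ne hj]
  · simp

noncomputable def delta (v : Fin n → Bool) : Mo n := fun w => if w = v then 1 else 0

lemma unop_smul' (c : ℝ) (A : (Module.End ℝ (Mo n))ᵐᵒᵖ) : (c • A).unop = c • A.unop := rfl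

lemma unop_rho_mul (x y : Cl n) (g : Mo n) :
    (rho n (x * y)).unop g = (rho n y).unop ((rho n x).unop g) := by
  rw [map_mul, MulOpposite.unop_mul, Module.End.mul_apply]

lemma T_delta (i : Fin n) (w : Fin n → Bool) :
    T i (delta w) = sgn i w • delta (Function.update w i (!w i)) := by
  funext x
  rw [T_apply]
  by_cases hx : x = Function.update w i (!w i)
  · subst hx
    rw [flip_flip]
    simp only [delta, if_pos rfl, Pi.smul_apply, if_pos rfl, smul_eq_mul, mul_one]
    rw [sgn_update_of_not_lt w (!w i) (lt_irrefl i)]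
  · have hx2 : Function.update x i (!x i) ≠ w := by
      intro h
      apply hx
      rw [← h, flip_flip]
    simp [delta, hx, hx2]

lemma prod_apply (l : List (Fin n)) (w : Fin n → Bool)
    (hw : ∀ i ∈ l, ∀ k, i ≤ k → w k = false) (hl : l.Pairwise (· < ·)) :
    (rho n ((l.map (e n)).prod)).unop (delta w)
      = delta (fun k => w k || decide (k ∈ l)) := by
  induction l generalizing w with
  | nil =>
      simp only [List.map_nil, List.prod_nil, map_one, MulOpposite.unop_one,
        Module.End.one_apply, List.not_mem_nil, decide_false, Bool.or_false]
  | cons i t ih =>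
      rw [List.map_cons, List.prod_cons, unop_rho_mul, rho_e]
      have hwi : w i = false := hw i (List.mem_cons_self) i le_rfl
      have hsg : sgn i w = 1 := sgn_eq_one fun k hk => hw i (List.mem_cons_self) k hk.le
      have hTd : (op (T i)).unop (delta w) = delta (Function.update w i true) := by
        show T i (delta w) = _
        rw [T_delta, hsg, one_smul, hwi, Bool.not_false]
      rw [hTd]
      have hpair := (List.pairwise_cons.mp hl)
      have hw' : ∀ j ∈ t, ∀ k, j ≤ k → (Function.update w i true) k = false := by
        intro j hj k hk
        have hik : i < k := lt_of_lt_of_le (hpair.1 j hj) hk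
        rw [Function.update_of_ne (fun h => absurd hik (by rw [h]; exact lt_irrefl i))]
        exact hw j (List.mem_cons_of_mem i hj) k hk
      rw [ih (Function.update w i true) hw' hpair.2]
      have hfun : (fun k => Function.update w i true k || decide (k ∈ t))
          = (fun k => w k || decide (k ∈ i :: t)) := by
        funext k
        by_cases hk : k = i
        · subst hk
          simp [hwi, List.mem_cons]
        · rw [Function.update_of_ne hk]
          simp [List.mem_cons, hk]
      rw [hfun]

lemma rho_eVert (v : Fin n → Bool) :
    (rho n (eVert n v)).unop (delta (fun _ => false)) = delta v := by
  rw [eVert, prod_apply _ _ (fun i _ k _ => rfl)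
      (List.Pairwise.filter _ (List.pairwise_lt_finRange n))]
  funext k
  simp [List.mem_filter, List.mem_finRange]

end CliffHelper

open CliffHelper MulOpposite in
/-- Weighted version: if `x = Σ_{w ∈ W} x_w e_w` is nonzero with `x S_a = r·x`,
`r = √(Σ aᵢ²) > 0`, and `v₀` maximizes `|x_{v₀}|`, then the weighted degree of `v₀` in `W`
is at least `r`. -/
theorem weighted_maximizer_degree (n : ℕ) (a : Fin n → ℝ) (ha : ∀ i, 0 ≤ a i)
    (r : ℝ) (hr : r = Real.sqrt (∑ i, a i ^ 2)) (hrpos : 0 < r)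
    (W : Finset (Fin n → Bool))
    (c : (Fin n → Bool) → ℝ) (hsupp : ∀ v ∉ W, c v = 0)
    (hx0 : (∑ v, c v • eVert n v) ≠ 0)
    (heig : (∑ v, c v • eVert n v) * (∑ i, a i • e n i)
      = r • ∑ v, c v • eVert n v)
    (v₀ : Fin n → Bool) (hmax : ∀ v, |c v| ≤ |c v₀|) :
    r ≤ ∑ i ∈ Finset.univ.filter
          (fun i : Fin n => Function.update v₀ i (!v₀ i) ∈ W), a i := by
  classical
  set x : Cl n := ∑ v, c v • eVert n v with hxdef
  -- coefficient extraction
  have hKx : (rho n x).unop (delta (fun _ => false)) = fun w => c w := by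
    rw [hxdef, map_sum]
    rw [Finset.unop_sum, LinearMap.sum_apply]
    funext w
    rw [Finset.sum_apply]
    have : ∀ v : Fin n → Bool,
        ((rho n (c v • eVert n v)).unop (delta (fun _ => false))) w
          = if w = v then c v else 0 := by
      intro v
      rw [map_smul, unop_smul', LinearMap.smul_apply, rho_eVert]
      simp [delta, mul_ite]
    rw [Finset.sum_congr rfl fun v _ => this v, Finset.sum_ite_eq]
    simp
  have hc0 : c v₀ ≠ 0 := by
    intro h
    apply hx0
    have hz : ∀ v, c v = 0 := by
      intro v
      have hv := hmax v
      rw [h, abs_zero] at hv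
      exact abs_eq_zero.mp (le_antisymm hv (abs_nonneg _))
    rw [hxdef]
    simp [hz]
  -- the eigenvalue equation at v₀
  have hS : (rho n (∑ i, a i • e n i)).unop = ∑ i, a i • T (n := n) i := by
    rw [map_sum, Finset.unop_sum]
    refine Finset.sum_congr rfl fun i _ => ?_
    rw [map_smul, rho_e, unop_smul']
    rfl
  have hmain : r * c v₀
      = ∑ i, a i * (sgn i v₀ * c (Function.update v₀ i (!v₀ i))) := by
    have hEq := congrArg (fun z => (rho n z).unop (delta (fun _ : Fin n => false)) v₀) heig
    rw [unop_rho_mul, hKx, hS] at hEq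
    rw [map_smul, unop_smul', LinearMap.smul_apply, hKx] at hEq
    rw [LinearMap.sum_apply, Finset.sum_apply] at hEq
    have hterm : ∀ i : Fin n,
        ((a i • T (n := n) i) (fun w => c w)) v₀
          = a i * (sgn i v₀ * c (Function.update v₀ i (!v₀ i))) := by
      intro i
      rw [LinearMap.smul_apply, Pi.smul_apply, T_apply, smul_eq_mul]
    rw [Finset.sum_congr rfl fun i _ => hterm i] at hEq
    rw [hEq]
    simp [smul_eq_mul]
  -- inequality chain
  have h1 : r * |c v₀| ≤ ∑ i, a i * |c (Function.update v₀ i (!v₀ i))| := by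
    calc r * |c v₀| = |r * c v₀| := by rw [abs_mul, abs_of_pos hrpos]
      _ = |∑ i, a i * (sgn i v₀ * c (Function.update v₀ i (!v₀ i)))| := by rw [hmain]
      _ ≤ ∑ i, |a i * (sgn i v₀ * c (Function.update v₀ i (!v₀ i)))| :=
          Finset.abs_sum_le_sum_abs _ _
      _ = ∑ i, a i * |c (Function.update v₀ i (!v₀ i))| := by
          refine Finset.sum_congr rfl fun i _ => ?_
          rw [abs_mul, abs_mul, abs_sgn, one_mul, abs_of_nonneg (ha i)]
  have h2 : ∑ i, a i * |c (Function.update v₀ i (!v₀ i))|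
      ≤ (∑ i ∈ Finset.univ.filter
          (fun i : Fin n => Function.update v₀ i (!v₀ i) ∈ W), a i) * |c v₀| := by
    rw [← Finset.sum_filter_add_sum_filter_not Finset.univ
      (fun i : Fin n => Function.update v₀ i (!v₀ i) ∈ W)
      (fun i => a i * |c (Function.update v₀ i (!v₀ i))|)]
    have hz : ∑ i ∈ Finset.univ.filter
        (fun i : Fin n => ¬ Function.update v₀ i (!v₀ i) ∈ W),
        a i * |c (Function.update v₀ i (!v₀ i))| = 0 := by
      refine Finset.sum_eq_zero fun i hi => ?_
      rw [hsupp _ (Finset.mem_filter.mp hi).2, abs_zero, mul_zero]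
    rw [hz, add_zero, Finset.sum_mul]
    exact Finset.sum_le_sum fun i _ => mul_le_mul_of_nonneg_left (hmax _) (ha i)
  exact le_of_mul_le_mul_right (le_trans h1 h2) (abs_pos.mpr hc0)
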